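/- For the classical Laplacian comparison: setting α = (q²+1)^{−1}, the element Δ_q := □^L + ((q−q^{−1})/(q+q^{−1}))² L₀² in U_q(su(2)) where □^L = α(L₊L₋ + q²L₋L₊ + (1+q²)L_z L_z − 2(q²−1)L₀L_z) satisfies □^L = 2qα L₀ — i.e. in U_q(su(2)) with L₋ = q^{1/2}FK^{−1}, L₊ = q^{−1/2}EK^{−1}, L_z = (K^{−2}−1)/(q−q^{−1}), L₀ = (q(K²−1)+q^{−1}(K^{−2}−1))/(q−q^{−1})² + FE, the identity L₊L₋ + q²L₋L₊ + (1+q²)L_z² − 2(q²−1)L₀L_z = 2q L₀ holds. -/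

import Mathlib

set_option maxHeartbeats 6400000 in

/-- In `U_q(su(2))`, with `L₋ = q^{1/2}FK⁻¹`, `L₊ = q^{−1/2}EK⁻¹`,
`L_z = (K⁻²−1)/(q−q⁻¹)`, `L₀ = (q(K²−1)+q⁻¹(K⁻²−1))/(q−q⁻¹)² + FE`, one has
`L₊L₋ + q²L₋L₊ + (1+q²)L_z² − 2(q²−1)L₀L_z = 2q L₀`. -/
theorem laplacian_eq_casimir (q : ℝ) (h0 : 0 < q) (h1 : q < 1)
    (A : Type*) [Ring A] [Algebra ℂ A] (K Ki E F : A)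
    (hK : K * Ki = 1) (hK' : Ki * K = 1)
    (hKE : K * E = (q : ℂ) • (E * K))
    (hKF : K * F = ((q : ℂ)⁻¹) • (F * K))
    (hEF : E * F - F * E = ((q : ℂ) - (q : ℂ)⁻¹)⁻¹ • (K^2 - Ki^2))
    (Lm Lp Lz L0 : A)
    (hLm : Lm = (((q ^ ((1:ℝ)/2) : ℝ) : ℂ)) • (F * Ki))
    (hLp : Lp = (((q ^ (-((1:ℝ)/2)) : ℝ) : ℂ)) • (E * Ki))
    (hLz : Lz = ((q : ℂ) - (q : ℂ)⁻¹)⁻¹ • (Ki^2 - 1))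
    (hL0 : L0 = (((q : ℂ) - (q : ℂ)⁻¹)^2)⁻¹ •
        ((q : ℂ) • (K^2 - 1) + ((q : ℂ)⁻¹) • (Ki^2 - 1)) + F * E) :
    Lp * Lm + ((q : ℂ)^2) • (Lm * Lp) + ((1 : ℂ) + (q : ℂ)^2) • (Lz * Lz)
        - ((2 : ℂ) * ((q : ℂ)^2 - 1)) • (L0 * Lz)
      = ((2 : ℂ) * (q : ℂ)) • L0 := by
  have hq0 : (q : ℂ) ≠ 0 := by exact_mod_cast h0.ne'
  have hq1 : (q : ℝ) ^ 2 ≠ 1 := by nlinarith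
  have hl : (q : ℂ) - (q : ℂ)⁻¹ ≠ 0 := by
    intro h
    apply hq1
    have : (q : ℂ) ^ 2 = 1 := by
      have := sub_eq_zero.mp h
      field_simp at this
      linear_combination this
    exact_mod_cast this
  have hq2 : (q : ℂ)^2 - 1 ≠ 0 := by
    rw [sub_ne_zero]
    intro h
    exact hq1 (by exact_mod_cast h)
  have d1 : (-1 + (q:ℂ)^2) ≠ 0 := by
    intro h; apply hq2; linear_combination h
  have d2 : (1 - (q:ℂ)^2*2 + (q:ℂ)^4) ≠ 0 := by
    have : (1 - (q:ℂ)^2*2 + (q:ℂ)^4) = ((q:ℂ)^2 - 1)^2 := by ring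
    rw [this]; exact pow_ne_zero _ hq2
  have d3 : (-(q:ℂ) + ((q:ℂ)^3*3 - (q:ℂ)^5*3) + (q:ℂ)^7) ≠ 0 := by
    have : (-(q:ℂ) + ((q:ℂ)^3*3 - (q:ℂ)^5*3) + (q:ℂ)^7) = (q:ℂ) * ((q:ℂ)^2 - 1)^3 := by ring
    rw [this]; exact mul_ne_zero hq0 (pow_ne_zero _ hq2)
  have d4 : (-1 + ((q:ℂ)^2*3 - (q:ℂ)^4*3) + (q:ℂ)^6) ≠ 0 := by
    have : (-1 + ((q:ℂ)^2*3 - (q:ℂ)^4*3) + (q:ℂ)^6) = ((q:ℂ)^2 - 1)^3 := by ring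
    rw [this]; exact pow_ne_zero _ hq2
  have d5 : ((q:ℂ) - (q:ℂ)^3*2 + (q:ℂ)^5) ≠ 0 := by
    have : ((q:ℂ) - (q:ℂ)^3*2 + (q:ℂ)^5) = (q:ℂ) * ((q:ℂ)^2 - 1)^2 := by ring
    rw [this]; exact mul_ne_zero hq0 (pow_ne_zero _ hq2)
  have d6 : (-(q:ℂ) + ((q:ℂ) ^ 3 * 9 - (q:ℂ) ^ 5 * 36) + ((q:ℂ) ^ 7 * 84 - (q:ℂ) ^ 9 * 126) +
      ((q:ℂ) ^ 11 * 126 - (q:ℂ) ^ 13 * 84) + ((q:ℂ) ^ 15 * 36 - (q:ℂ) ^ 17 * 9) + (q:ℂ) ^ 19) ≠ 0 := by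
    have : (-(q:ℂ) + ((q:ℂ) ^ 3 * 9 - (q:ℂ) ^ 5 * 36) + ((q:ℂ) ^ 7 * 84 - (q:ℂ) ^ 9 * 126) +
        ((q:ℂ) ^ 11 * 126 - (q:ℂ) ^ 13 * 84) + ((q:ℂ) ^ 15 * 36 - (q:ℂ) ^ 17 * 9) + (q:ℂ) ^ 19)
        = (q:ℂ) * ((q:ℂ)^2 - 1)^9 := by ring
    rw [this]; exact mul_ne_zero hq0 (pow_ne_zero _ hq2)
  have d7 : ((q:ℂ) - (q:ℂ) ^ 3 * 8 + ((q:ℂ) ^ 5 * 28 - (q:ℂ) ^ 7 * 56) +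
      ((q:ℂ) ^ 9 * 70 - (q:ℂ) ^ 11 * 56) + ((q:ℂ) ^ 13 * 28 - (q:ℂ) ^ 15 * 8) + (q:ℂ) ^ 17) ≠ 0 := by
    have : ((q:ℂ) - (q:ℂ) ^ 3 * 8 + ((q:ℂ) ^ 5 * 28 - (q:ℂ) ^ 7 * 56) +
        ((q:ℂ) ^ 9 * 70 - (q:ℂ) ^ 11 * 56) + ((q:ℂ) ^ 13 * 28 - (q:ℂ) ^ 15 * 8) + (q:ℂ) ^ 17)
        = (q:ℂ) * ((q:ℂ)^2 - 1)^8 := by ring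
    rw [this]; exact mul_ne_zero hq0 (pow_ne_zero _ hq2)
  have d8 : ((q:ℂ) - (q:ℂ) ^ 3 * 6 + ((q:ℂ) ^ 5 * 15 - (q:ℂ) ^ 7 * 20) +
      ((q:ℂ) ^ 9 * 15 - (q:ℂ) ^ 11 * 6) + (q:ℂ) ^ 13) ≠ 0 := by
    have : ((q:ℂ) - (q:ℂ) ^ 3 * 6 + ((q:ℂ) ^ 5 * 15 - (q:ℂ) ^ 7 * 20) +
        ((q:ℂ) ^ 9 * 15 - (q:ℂ) ^ 11 * 6) + (q:ℂ) ^ 13) = (q:ℂ) * ((q:ℂ)^2 - 1)^6 := by ring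
    rw [this]; exact mul_ne_zero hq0 (pow_ne_zero _ hq2)
  have d9 : (-(q:ℂ) + ((q:ℂ)^3*5 - (q:ℂ)^5*10) + ((q:ℂ)^7*10 - (q:ℂ)^9*5) + (q:ℂ)^11) ≠ 0 := by
    have : (-(q:ℂ) + ((q:ℂ)^3*5 - (q:ℂ)^5*10) + ((q:ℂ)^7*10 - (q:ℂ)^9*5) + (q:ℂ)^11)
        = (q:ℂ) * ((q:ℂ)^2 - 1)^5 := by ring
    rw [this]; exact mul_ne_zero hq0 (pow_ne_zero _ hq2)
  -- scalar facts about the half-powers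
  have hst : (((q ^ ((1:ℝ)/2) : ℝ) : ℂ)) * (((q ^ (-((1:ℝ)/2)) : ℝ) : ℂ)) = 1 := by
    rw [← Complex.ofReal_mul, ← Real.rpow_add h0]
    norm_num
  have hts : (((q ^ (-((1:ℝ)/2)) : ℝ) : ℂ)) * (((q ^ ((1:ℝ)/2) : ℝ) : ℂ)) = 1 := by
    rw [mul_comm]; exact hst
  -- remove the half-powers
  have h1' : Lp * Lm = (E * Ki) * (F * Ki) := by
    rw [hLp, hLm, smul_mul_assoc, mul_smul_comm, smul_smul, hts, one_smul]
  have h2' : Lm * Lp = (F * Ki) * (E * Ki) := by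
    rw [hLm, hLp, smul_mul_assoc, mul_smul_comm, smul_smul, hst, one_smul]
  -- commutation of Ki with E and F
  have hFKi : F * Ki = (q : ℂ)⁻¹ • (Ki * F) := by
    calc F * Ki = (Ki * K) * (F * Ki) := by rw [hK', one_mul]
    _ = Ki * ((K * F) * Ki) := by rw [mul_assoc, mul_assoc]
    _ = Ki * (((q : ℂ)⁻¹ • (F * K)) * Ki) := by rw [hKF]
    _ = (q : ℂ)⁻¹ • (Ki * (F * (K * Ki))) := by
        rw [smul_mul_assoc, mul_smul_comm, mul_assoc]
    _ = (q : ℂ)⁻¹ • (Ki * F) := by rw [hK, mul_one]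
  have hKiF : Ki * F = (q : ℂ) • (F * Ki) := by
    rw [hFKi, smul_smul, mul_inv_cancel₀ hq0, one_smul]
  have hEKi : E * Ki = (q : ℂ) • (Ki * E) := by
    calc E * Ki = (Ki * K) * (E * Ki) := by rw [hK', one_mul]
    _ = Ki * ((K * E) * Ki) := by rw [mul_assoc, mul_assoc]
    _ = Ki * (((q : ℂ) • (E * K)) * Ki) := by rw [hKE]
    _ = (q : ℂ) • (Ki * (E * (K * Ki))) := by
        rw [smul_mul_assoc, mul_smul_comm, mul_assoc]
    _ = (q : ℂ) • (Ki * E) := by rw [hK, mul_one]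
  have hKiE : Ki * E = (q : ℂ)⁻¹ • (E * Ki) := by
    rw [hEKi, smul_smul, inv_mul_cancel₀ hq0, one_smul]
  -- associated ∀-versions for simp normalization (right-assoc monomials)
  have hKiF' : ∀ x : A, Ki * (F * x) = (q : ℂ) • (F * (Ki * x)) := by
    intro x; rw [← mul_assoc, hKiF, smul_mul_assoc, mul_assoc]
  have hKiE' : ∀ x : A, Ki * (E * x) = (q : ℂ)⁻¹ • (E * (Ki * x)) := by
    intro x; rw [← mul_assoc, hKiE, smul_mul_assoc, mul_assoc]
  -- EF in terms of FE
  have hEF1 : E * F = F * E + ((q : ℂ) - (q : ℂ)⁻¹)⁻¹ • (K * K) - ((q : ℂ) - (q : ℂ)⁻¹)⁻¹ • (Ki * Ki) := by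
    have := sub_eq_iff_eq_add.mp hEF
    rw [this, pow_two, pow_two, smul_sub]; abel
  have hEF' : ∀ x : A, E * (F * x) = F * (E * x) + ((q : ℂ) - (q : ℂ)⁻¹)⁻¹ • (K * (K * x)) - ((q : ℂ) - (q : ℂ)⁻¹)⁻¹ • (Ki * (Ki * x)) := by
    intro x
    rw [← mul_assoc, hEF1, sub_mul, add_mul, smul_mul_assoc, smul_mul_assoc, mul_assoc, mul_assoc, mul_assoc]
  -- K² Ki² = 1
  have hKKii : ∀ x : A, K * (K * (Ki * (Ki * x))) = x := by
    intro x
    calc K * (K * (Ki * (Ki * x))) = K * ((K * Ki) * (Ki * x)) := by rw [mul_assoc]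
    _ = K * (Ki * x) := by rw [hK, one_mul]
    _ = (K * Ki) * x := by rw [mul_assoc]
    _ = x := by rw [hK, one_mul]
  have hKKii1 : K * (K * (Ki * Ki)) = 1 := by
    have := hKKii 1; simpa using this
  have hlq : (q : ℂ) - (q : ℂ)⁻¹ = ((q:ℂ)^2 - 1) / (q:ℂ) := by
    field_simp
  have e1 : ((q : ℂ) - (q : ℂ)⁻¹)⁻¹ = (q:ℂ) * ((q:ℂ)^2 - 1)⁻¹ := by
    rw [hlq, inv_div, div_eq_mul_inv]
  have e2 : (((q : ℂ) - (q : ℂ)⁻¹)^2)⁻¹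
      = (q:ℂ)^2 * (((q:ℂ)^2 - 1)⁻¹ * ((q:ℂ)^2 - 1)⁻¹) := by
    rw [← inv_pow, e1]; ring
  simp only [e1] at hEF1 hEF'
  rw [h1', h2', hLz, hL0, e2, e1]
  simp only [pow_two Ki, pow_two K]
  simp only [mul_add, add_mul, mul_sub, sub_mul, mul_one, one_mul,
    smul_mul_assoc, mul_smul_comm, smul_smul, smul_sub, smul_add, mul_assoc]
  simp only [hKiF', hKiE', hKiF, hKiE, hEF', hEF1, hKKii, hKKii1,
    smul_mul_assoc, mul_smul_comm, smul_smul, smul_sub, smul_add, mul_one, one_mul]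
  generalize hv : ((q:ℂ)^2 - 1)⁻¹ = v
  generalize hu : (q:ℂ)⁻¹ = u
  match_scalars
  all_goals (try rw [← hu]) <;> (try rw [← hv])
  all_goals field_simp
  all_goals try ring
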